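/- Let m, g, η > 0 and assume the viability condition 1 + sqrt(4·g²·η² + m²) > g·(η² + 1) + m. Then there exists exactly one tuple (N1^a, N1^A, N2^a, N2^A, δ^a, δ^A, δ) ∈ ℝ⁷ with N1^a, N1^A, N2^a, N2^A > 0 such that, together with Z = 0, it solves the eight-equation symmetric stationary limit system described in the context. Moreover this solution satisfies N1^a = N2^A, N2^a = N1^A, and δ^A = δ^a. -/

import Mathlib

/-!
At `Z = 0` the population equations say that each allele grows at rate `α = 1 - m - g(1-η)²` in
one patch and `β = 1 - m - g(1+η)²` in the other. Multiplying the two equations of one allele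
gives `(S₁ - α)(S₂ - β) = m²`, and for the other allele `(S₁ - β)(S₂ - α) = m²`, where `Sᵢ` is the
total population of patch `i`. As `α ≠ β` this forces `S₁ = S₂ = S`, and positivity selects the
root `S = (α + β)/2 + √((α - β)²/4 + m²)` of `(S - α)(S - β) = m²`: this is the `N1` of the
viability condition. Each density is then determined linearly, and the solution is symmetric.
At symmetric densities `x, y` the remaining equations form a linear system in `(δ^a, δ^A, δ)`,
nonsingular because `K - QW = 2` for `K = y/x + x/y`, `Q = x/y - y/x`, `W = (x - y)/(x + y)`.
-/

/-- The symmetric stationary limit system with parameters m, g, η, unknowns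
(N1a, N1A, N2a, N2A, δa, δA, δ, Z). -/
def SymSys (m g eta N1a N1A N2a N2A da dA d Z : ℝ) : Prop :=
  N1a - (N1A + N1a) * N1a - g * (Z - eta + 1) ^ 2 * N1a + m * (N2a - N1a) = 0 ∧
  N1A - (N1A + N1a) * N1A - g * (Z + eta + 1) ^ 2 * N1A + m * (N2A - N1A) = 0 ∧
  N2a - (N2A + N2a) * N2a - g * (Z - eta - 1) ^ 2 * N2a + m * (N1a - N2a) = 0 ∧
  N2A - (N2A + N2a) * N2A - g * (Z + eta - 1) ^ 2 * N2A + m * (N1A - N2A) = 0 ∧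
  2 * g - m * da * (N2a / N1a + N1a / N2a)
    + ((dA - da) / 4) * (N2A / (N2a + N2A) + N1A / (N1a + N1A))
    + (d / 2) * (N2A / (N2a + N2A) - N1A / (N1a + N1A)) = 0 ∧
  2 * g - m * dA * (N2A / N1A + N1A / N2A)
    + ((da - dA) / 4) * (N2a / (N2a + N2A) + N1a / (N1a + N1A))
    + (d / 2) * (N1a / (N1a + N1A) - N2a / (N2a + N2A)) = 0 ∧
  -d / 2 - 2 * g * eta
    + m * ((dA / 2) * (N2A / N1A - N1A / N2A) - (da / 2) * (N2a / N1a - N1a / N2a)) = 0 ∧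
  -2 * g * Z
    + m * ((da / 2) * (N2a / N1a - N1a / N2a) + (dA / 2) * (N2A / N1A - N1A / N2A))
    + ((dA - da) / 4) * (N2A / (N2A + N2a) - N1A / (N1A + N1a))
    + (d / 2) * (N1A / (N1A + N1a) + N2A / (N2A + N2a) - 1) = 0

noncomputable def balanceTotal (m α β : ℝ) : ℝ :=
  (α + β) / 2 + Real.sqrt ((α - β) ^ 2 / 4 + m ^ 2)

/-- Equilibrium density, in a patch, of an allele with growth rate `α` there when the other
allele has rate `β`. -/
noncomputable def localDensity (m α β : ℝ) : ℝ :=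
  balanceTotal m α β * (balanceTotal m α β - β - m) / (α - β)

/-- Stationarity of the densities `uᵢ`, `vᵢ` of two alleles in patches `i = 1, 2` under
competition within patches and migration at rate `m`: `u` grows at rate `α` in patch 1 and `β`
in patch 2, `v` the other way round. -/
def MigrationBalance (m α β u₁ v₁ u₂ v₂ : ℝ) : Prop :=
  u₁ * (u₁ + v₁ - α) = m * u₂ ∧ v₁ * (u₁ + v₁ - β) = m * v₂ ∧
  u₂ * (u₂ + v₂ - β) = m * u₁ ∧ v₂ * (u₂ + v₂ - α) = m * v₁

lemma mul_eq_sq_of_exchange {m u w P R : ℝ} (hu : u ≠ 0) (hw : w ≠ 0)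
    (h₁ : u * P = m * w) (h₂ : w * R = m * u) : P * R = m ^ 2 :=
  mul_left_cancel₀ (mul_ne_zero hu hw) (by linear_combination w * R * h₁ + m * w * h₂)

lemma balanceTotal_comm (m α β : ℝ) : balanceTotal m β α = balanceTotal m α β := by
  unfold balanceTotal
  ring_nf

lemma balanceTotal_sub_mul_sub (m α β : ℝ) :
    (balanceTotal m α β - α) * (balanceTotal m α β - β) = m ^ 2 := by
  have hr := Real.sq_sqrt (by positivity : 0 ≤ (α - β) ^ 2 / 4 + m ^ 2)
  unfold balanceTotal
  linear_combination hr

section Balance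

variable {m α β u₁ v₁ u₂ v₂ : ℝ}

lemma localDensity_add_localDensity (hαβ : α ≠ β) :
    localDensity m α β + localDensity m β α = balanceTotal m α β := by
  have hαβ' : α - β ≠ 0 := sub_ne_zero.2 hαβ
  have hβα' : β - α ≠ 0 := sub_ne_zero.2 hαβ.symm
  unfold localDensity
  rw [balanceTotal_comm m α β]
  field_simp
  ring

lemma localDensity_pos (hm : 0 < m) (hβα : β < α) (hS : 0 < balanceTotal m α β) :
    0 < localDensity m α β ∧ 0 < localDensity m β α := by
  have hm_le : m ≤ Real.sqrt ((α - β) ^ 2 / 4 + m ^ 2) :=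
    Real.le_sqrt_of_sq_le (by nlinarith [sq_nonneg (α - β)])
  have h_lt : Real.sqrt ((α - β) ^ 2 / 4 + m ^ 2) < (α - β) / 2 + m :=
    (Real.sqrt_lt' (by linarith)).2 (by nlinarith)
  refine ⟨div_pos (mul_pos hS ?_) (by linarith), ?_⟩
  · unfold balanceTotal; linarith
  · rw [localDensity, balanceTotal_comm m α β]
    refine div_pos_of_neg_of_neg (mul_neg_of_pos_of_neg hS ?_) (by linarith)
    unfold balanceTotal; linarith

lemma migrationBalance_localDensity (hαβ : α ≠ β) :
    MigrationBalance m α β (localDensity m α β) (localDensity m β α)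
      (localDensity m β α) (localDensity m α β) := by
  have hsum := localDensity_add_localDensity (m := m) hαβ
  have hprod := balanceTotal_sub_mul_sub m α β
  have hαβ' : α - β ≠ 0 := sub_ne_zero.2 hαβ
  have hβα' : β - α ≠ 0 := sub_ne_zero.2 hαβ.symm
  rw [MigrationBalance, add_comm (localDensity m β α), hsum]
  unfold localDensity
  rw [balanceTotal_comm m α β]
  refine ⟨?_, ?_, ?_, ?_⟩ <;> field_simp
  · linear_combination balanceTotal m α β * (β - α) * hprod
  · linear_combination balanceTotal m α β * (α - β) * hprod
  · linear_combination balanceTotal m α β * (α - β) * hprod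
  · linear_combination balanceTotal m α β * (β - α) * hprod

namespace MigrationBalance

lemma swap_patches (h : MigrationBalance m α β u₁ v₁ u₂ v₂) :
    MigrationBalance m β α u₂ v₂ u₁ v₁ :=
  ⟨h.2.2.1, h.2.2.2, h.1, h.2.1⟩

lemma swap_alleles (h : MigrationBalance m α β u₁ v₁ u₂ v₂) :
    MigrationBalance m β α v₁ u₁ v₂ u₂ := by
  obtain ⟨h₁, h₂, h₃, h₄⟩ := h
  exact ⟨by rw [add_comm]; exact h₂, by rw [add_comm]; exact h₁,
    by rw [add_comm]; exact h₄, by rw [add_comm]; exact h₃⟩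

lemma sum_eq (h : MigrationBalance m α β u₁ v₁ u₂ v₂) (hαβ : α ≠ β)
    (hu₁ : u₁ ≠ 0) (hv₁ : v₁ ≠ 0) (hu₂ : u₂ ≠ 0) (hv₂ : v₂ ≠ 0) :
    u₁ + v₁ = u₂ + v₂ := by
  obtain ⟨h₁, h₂, h₃, h₄⟩ := h
  have hu := mul_eq_sq_of_exchange hu₁ hu₂ h₁ h₃
  have hv := mul_eq_sq_of_exchange hv₁ hv₂ h₂ h₄
  have h : (α - β) * (u₁ + v₁ - (u₂ + v₂)) = 0 := by linear_combination hu - hv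
  exact sub_eq_zero.1 ((mul_eq_zero.1 h).resolve_left (sub_ne_zero.2 hαβ))

lemma sum_eq_balanceTotal (h : MigrationBalance m α β u₁ v₁ u₂ v₂) (hm : 0 < m) (hαβ : α ≠ β)
    (hu₁ : 0 < u₁) (hv₁ : 0 < v₁) (hu₂ : 0 < u₂) (hv₂ : 0 < v₂) :
    u₁ + v₁ = balanceTotal m α β := by
  have hS := h.sum_eq hαβ hu₁.ne' hv₁.ne' hu₂.ne' hv₂.ne'
  obtain ⟨h₁, h₂, h₃, -⟩ := h
  have hprod := mul_eq_sq_of_exchange hu₁.ne' hu₂.ne' h₁ h₃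
  have hα : 0 < u₁ + v₁ - α := pos_of_mul_pos_right (h₁ ▸ mul_pos hm hu₂) hu₁.le
  have hβ : 0 < u₁ + v₁ - β := pos_of_mul_pos_right (h₂ ▸ mul_pos hm hv₂) hv₁.le
  have hsq : (α - β) ^ 2 / 4 + m ^ 2 = (u₁ + v₁ - (α + β) / 2) ^ 2 := by
    rw [← hS] at hprod; linear_combination -hprod
  rw [balanceTotal, hsq, Real.sqrt_sq (by linarith)]
  ring

lemma eq_localDensity (h : MigrationBalance m α β u₁ v₁ u₂ v₂) (hm : 0 < m) (hαβ : α ≠ β)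
    (hu₁ : 0 < u₁) (hv₁ : 0 < v₁) (hu₂ : 0 < u₂) (hv₂ : 0 < v₂) :
    u₁ = localDensity m α β := by
  have hS := h.sum_eq hαβ hu₁.ne' hv₁.ne' hu₂.ne' hv₂.ne'
  have hT := h.sum_eq_balanceTotal hm hαβ hu₁ hv₁ hu₂ hv₂
  obtain ⟨h₁, h₂, -, -⟩ := h
  rw [localDensity, ← hT, eq_div_iff (sub_ne_zero.2 hαβ)]
  linear_combination m * hS - h₁ - h₂

lemma eq_localDensities (h : MigrationBalance m α β u₁ v₁ u₂ v₂) (hm : 0 < m) (hαβ : α ≠ β)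
    (hu₁ : 0 < u₁) (hv₁ : 0 < v₁) (hu₂ : 0 < u₂) (hv₂ : 0 < v₂) :
    u₁ = localDensity m α β ∧ v₁ = localDensity m β α ∧
      u₂ = localDensity m β α ∧ v₂ = localDensity m α β :=
  ⟨h.eq_localDensity hm hαβ hu₁ hv₁ hu₂ hv₂,
    h.swap_alleles.eq_localDensity hm hαβ.symm hv₁ hu₁ hv₂ hu₂,
    h.swap_patches.eq_localDensity hm hαβ.symm hu₂ hv₂ hu₁ hv₁,
    h.swap_patches.swap_alleles.eq_localDensity hm hαβ hv₂ hu₂ hv₁ hu₁⟩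

end MigrationBalance

end Balance

lemma linear_system_iff {m g η K Q W da dA d : ℝ} (hm : 0 < m) (hK : 0 < K)
    (hKQW : K - Q * W = 2) :
    (2 * g - m * K * da + (dA - da) / 4 + d / 2 * W = 0 ∧
      2 * g - m * K * dA + (da - dA) / 4 + d / 2 * W = 0 ∧
      -d / 2 - 2 * g * η + m * Q / 2 * (da + dA) = 0) ↔
    dA = da ∧ da = g * (1 - η * W) / m ∧ d = 2 * m * Q * da - 4 * g * η := by
  constructor
  · rintro ⟨e₅, e₆, e₇⟩
    have hdet : 0 < m * K + 1 / 2 := by positivity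
    have hdA : dA = da := by
      have h : (dA - da) * (m * K + 1 / 2) = 0 := by linear_combination e₅ - e₆
      exact sub_eq_zero.1 ((mul_eq_zero.1 h).resolve_right hdet.ne')
    subst hdA
    refine ⟨rfl, ?_, by linear_combination -2 * e₇⟩
    rw [eq_div_iff hm.ne']
    linear_combination -(e₅ + W * e₇ + m * dA * hKQW) / 2
  · rintro ⟨rfl, hda, rfl⟩
    rw [eq_div_iff hm.ne'] at hda
    refine ⟨?_, ?_, by ring⟩ <;> linear_combination -2 * hda - m * dA * hKQW

lemma migrationBalance_of_symSys {m g η u₁ v₁ u₂ v₂ da dA d : ℝ}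
    (h : SymSys m g η u₁ v₁ u₂ v₂ da dA d 0) :
    MigrationBalance m (1 - m - g * (1 - η) ^ 2) (1 - m - g * (1 + η) ^ 2) u₁ v₁ u₂ v₂ := by
  obtain ⟨e₁, e₂, e₃, e₄, -⟩ := h
  refine ⟨?_, ?_, ?_, ?_⟩
  · linear_combination -e₁
  · linear_combination -e₂
  · linear_combination -e₃
  · linear_combination -e₄

lemma symSys_symmetric_iff {m g η x y da dA d : ℝ} (hm : 0 < m) (hx : 0 < x) (hy : 0 < y)
    (hbal : MigrationBalance m (1 - m - g * (1 - η) ^ 2) (1 - m - g * (1 + η) ^ 2) x y y x) :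
    SymSys m g η x y y x da dA d 0 ↔
      dA = da ∧ da = g * (1 - η * ((x - y) / (x + y))) / m ∧
        d = 2 * m * (x / y - y / x) * da - 4 * g * η := by
  have hK : 0 < y / x + x / y := by positivity
  have hKQW : (y / x + x / y) - (x / y - y / x) * ((x - y) / (x + y)) = 2 := by
    field_simp
    ring
  have hsplit : x / (x + y) + y / (x + y) = 1 := by
    field_simp
  rw [← linear_system_iff hm hK hKQW]
  obtain ⟨b₁, b₂, b₃, b₄⟩ := hbal
  constructor
  · rintro ⟨-, -, -, -, e₅, e₆, e₇, -⟩
    exact ⟨by linear_combination e₅ - (dA - da) / 4 * hsplit,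
      by linear_combination e₆ - (da - dA) / 4 * hsplit, by linear_combination e₇⟩
  · intro hlin
    obtain ⟨hdA, -, -⟩ := (linear_system_iff hm hK hKQW).1 hlin
    subst hdA
    obtain ⟨g₅, g₆, g₇⟩ := hlin
    exact ⟨by linear_combination -b₁, by linear_combination -b₂, by linear_combination -b₃,
      by linear_combination -b₄, by linear_combination g₅, by linear_combination g₆,
      by linear_combination g₇, by linear_combination d / 2 * hsplit⟩

theorem stmt_14 (m g eta : ℝ) (hm : 0 < m) (hg : 0 < g) (heta : 0 < eta)
    (hviab : 1 + Real.sqrt (4 * g ^ 2 * eta ^ 2 + m ^ 2) > g * (eta ^ 2 + 1) + m) :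
    ∃ N1a N1A N2a N2A da dA d : ℝ,
      (0 < N1a ∧ 0 < N1A ∧ 0 < N2a ∧ 0 < N2A) ∧
      SymSys m g eta N1a N1A N2a N2A da dA d 0 ∧
      (N1a = N2A ∧ N2a = N1A ∧ dA = da) ∧
      (∀ N1a' N1A' N2a' N2A' da' dA' d' : ℝ,
        (0 < N1a' ∧ 0 < N1A' ∧ 0 < N2a' ∧ 0 < N2A') →
        SymSys m g eta N1a' N1A' N2a' N2A' da' dA' d' 0 →
        N1a' = N1a ∧ N1A' = N1A ∧ N2a' = N2a ∧ N2A' = N2A ∧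
          da' = da ∧ dA' = dA ∧ d' = d) := by
  set α := 1 - m - g * (1 - eta) ^ 2
  set β := 1 - m - g * (1 + eta) ^ 2
  have hβα : β < α := by nlinarith [mul_pos hg heta]
  have hS : 0 < balanceTotal m α β := by
    rw [balanceTotal, show (α - β) ^ 2 / 4 + m ^ 2 = 4 * g ^ 2 * eta ^ 2 + m ^ 2 by ring]
    linarith
  obtain ⟨hp, hq⟩ := localDensity_pos hm hβα hS
  have hbal := migrationBalance_localDensity (m := m) hβα.ne'
  set p := localDensity m α β
  set q := localDensity m β α
  set δa := g * (1 - eta * ((p - q) / (p + q))) / m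
  set δ := 2 * m * (p / q - q / p) * δa - 4 * g * eta
  refine ⟨p, q, q, p, δa, δa, δ, ⟨hp, hq, hq, hp⟩,
    (symSys_symmetric_iff hm hp hq hbal).2 ⟨rfl, rfl, rfl⟩, ⟨rfl, rfl, rfl⟩, ?_⟩
  rintro u₁ v₁ u₂ v₂ δa' δA' δ' ⟨hu₁, hv₁, hu₂, hv₂⟩ hsys
  obtain ⟨rfl, rfl, rfl, rfl⟩ :=
    (migrationBalance_of_symSys hsys).eq_localDensities hm hβα.ne' hu₁ hv₁ hu₂ hv₂
  obtain ⟨rfl, rfl, rfl⟩ := (symSys_symmetric_iff hm hp hq hbal).1 hsys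
  exact ⟨rfl, rfl, rfl, rfl, rfl, rfl, rfl⟩
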